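/- arXiv:2311.03201 — 6 statements merged into one kernel-verified Lean document; each statement's English description precedes it below -/
import Mathlib

section
/- Let H be a real inner product space and y₁,…,yₙ ∈ H with Gram matrix V = (⟨yᵢ,yⱼ⟩) having eigenvalues λ₁ ≥ … ≥ λₙ ≥ 0 and orthonormal eigenvectors u₁,…,uₙ ∈ ℝⁿ. Then for every subspace W ⊆ H with dim W ≤ k (1 ≤ k < n), Σ_{i=1}^n ‖yᵢ − Π_W yᵢ‖² ≥ Σ_{i=k+1}^n λᵢ; moreover, for W = span{z₁,…,z_k}, where zᵢ = Σⱼ (uᵢ)ⱼ yⱼ are the principal components, equality holds: Σ_{i=1}^n ‖yᵢ − Π_W yᵢ‖² = Σ_{i=k+1}^n λᵢ. -/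
/-!
Because the `uᵢ` are orthonormal eigenvectors of the Gram matrix, the principal components are
pairwise orthogonal with `‖zᵢ‖² = λᵢ`, and `yⱼ = ∑ᵢ (uᵢ)ⱼ zᵢ` is an orthogonal change of basis.
Such a change of basis preserves `∑ ‖T xᵢ‖²` for every linear `T`, so the residual
`∑ⱼ ‖yⱼ - Π_W yⱼ‖²` equals `∑ᵢ ‖zᵢ - Π_W zᵢ‖²`. For `W = span {z₁, …, z_k}` this is `∑_{i>k} λᵢ`,
since `zᵢ ∈ W` for `i ≤ k` and `zᵢ ⟂ W` for `i > k`. In general it is `∑ λᵢ - ∑ λᵢ βᵢ` with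
`βᵢ = ‖Π_W (zᵢ / ‖zᵢ‖)‖² ∈ [0, 1]`, and Bessel's inequality against an orthonormal basis of `W`
gives `∑ βᵢ ≤ dim W ≤ k`; a combination of the decreasing `λᵢ` with such weights is at most
`λ₁ + ⋯ + λ_k`.
-/

open scoped InnerProductSpace

open Finset

section OrthogonalRows

variable {ι : Type*} [Fintype ι] [DecidableEq ι] {u : ι → ι → ℝ}

theorem sum_mul_eq_ite_of_rows_orthonormal
    (hu : ∀ i j, ∑ a, u i a * u j a = if i = j then 1 else 0) (a b : ι) :
    ∑ i, u i a * u i b = if a = b then 1 else 0 := by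
  have hrows : Matrix.of u * (Matrix.of u).transpose = 1 := by
    ext i j
    simpa [Matrix.mul_apply, Matrix.one_apply] using hu i j
  have hcols : (Matrix.of u).transpose * Matrix.of u = 1 := mul_eq_one_comm.mp hrows
  simpa [Matrix.mul_apply, Matrix.one_apply] using congrFun (congrFun hcols a) b

variable {E : Type*} [NormedAddCommGroup E] [InnerProductSpace ℝ E]

theorem sum_smul_sum_smul_of_rows_orthonormal
    (hu : ∀ i j, ∑ a, u i a * u j a = if i = j then 1 else 0) (y : ι → E) (j : ι) :
    ∑ i, u i j • ∑ a, u i a • y a = y j := by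
  simp_rw [Finset.smul_sum, smul_smul]
  rw [Finset.sum_comm]
  simp_rw [← Finset.sum_smul, sum_mul_eq_ite_of_rows_orthonormal hu, ite_smul, one_smul,
    zero_smul, Finset.sum_ite_eq, Finset.mem_univ, if_true]

theorem sum_norm_sq_sum_smul_of_rows_orthonormal
    (hu : ∀ i j, ∑ a, u i a * u j a = if i = j then 1 else 0) (x : ι → E) :
    ∑ j, ‖∑ i, u i j • x i‖ ^ 2 = ∑ i, ‖x i‖ ^ 2 := by
  simp_rw [← real_inner_self_eq_norm_sq, sum_inner, inner_sum, real_inner_smul_left,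
    real_inner_smul_right]
  calc ∑ j, ∑ i, ∑ i', u i j * (u i' j * ⟪x i, x i'⟫_ℝ)
      = ∑ i, ∑ i', (∑ j, u i j * u i' j) * ⟪x i, x i'⟫_ℝ := by
        simp_rw [Finset.sum_mul, mul_assoc]
        rw [Finset.sum_comm]
        exact Finset.sum_congr rfl fun i _ => Finset.sum_comm
    _ = ∑ i, ⟪x i, x i⟫_ℝ := by simp [hu]

theorem sum_norm_sq_sub_orthogonalProjectionOnto_of_rows_orthonormal
    (hu : ∀ i j, ∑ a, u i a * u j a = if i = j then 1 else 0) {y z : ι → E}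
    (hz : ∀ i, z i = ∑ j, u i j • y j) (W : Submodule ℝ E) [W.HasOrthogonalProjection] :
    ∑ j, ‖y j - (W.orthogonalProjectionOnto (y j) : E)‖ ^ 2 =
      ∑ i, ‖Wᗮ.starProjection (z i)‖ ^ 2 := by
  have hy : ∀ j, y j = ∑ i, u i j • z i := fun j => by
    simp_rw [hz]
    exact (sum_smul_sum_smul_of_rows_orthonormal hu y j).symm
  have hsub : ∀ x, x - (W.orthogonalProjectionOnto x : E) = Wᗮ.starProjection x := fun x => by
    simp [W.starProjection_orthogonal']
  simp_rw [hsub, hy, map_sum, map_smul]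
  exact sum_norm_sq_sum_smul_of_rows_orthonormal hu _

theorem inner_sum_smul_eq_ite_of_gram_eigenvectors
    (hu : ∀ i j, ∑ a, u i a * u j a = if i = j then 1 else 0)
    (y : ι → E) (V : Matrix ι ι ℝ) (hV : ∀ i j, V i j = ⟪y i, y j⟫_ℝ)
    {lam : ι → ℝ} (hu_eig : ∀ i, V.mulVec (u i) = lam i • u i) (i j : ι) :
    ⟪∑ a, u i a • y a, ∑ b, u j b • y b⟫_ℝ = if i = j then lam i else 0 := by
  have hVu : ∀ a, ∑ b, u j b * ⟪y a, y b⟫_ℝ = lam j * u j a := fun a => by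
    simpa [Matrix.mulVec, dotProduct, hV, mul_comm] using congrFun (hu_eig j) a
  simp_rw [sum_inner, inner_sum, real_inner_smul_left, real_inner_smul_right, ← Finset.mul_sum,
    hVu, mul_left_comm _ (lam j), ← Finset.mul_sum, hu i j]
  split_ifs with h <;> simp [h]

end OrthogonalRows

section Bessel

variable {ι : Type*} [Fintype ι] {E : Type*} [NormedAddCommGroup E] [InnerProductSpace ℝ E]

theorem sum_inner_sq_le_norm_sq_of_pairwise_orthogonal {v : ι → E}
    (hv : Pairwise fun i j => ⟪v i, v j⟫_ℝ = 0) (hv1 : ∀ i, ‖v i‖ ≤ 1) (x : E) :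
    ∑ i, ⟪v i, x⟫_ℝ ^ 2 ≤ ‖x‖ ^ 2 := by
  set p := ∑ i, ⟪v i, x⟫_ℝ • v i
  -- `0 ≤ ‖x - p‖² = ‖x‖² - 2 ⟪p, x⟫ + ‖p‖²`, with `⟪p, x⟫ = ∑ ⟪vᵢ, x⟫²` and `‖p‖² ≤ ∑ ⟪vᵢ, x⟫²`
  have hpx : ⟪p, x⟫_ℝ = ∑ i, ⟪v i, x⟫_ℝ ^ 2 := by
    simp [p, sum_inner, real_inner_smul_left, sq]
  have hpp : ‖p‖ ^ 2 ≤ ∑ i, ⟪v i, x⟫_ℝ ^ 2 := by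
    have : ‖p‖ ^ 2 = ∑ i, ⟪v i, x⟫_ℝ ^ 2 * ‖v i‖ ^ 2 := by
      rw [← real_inner_self_eq_norm_sq]
      simp_rw [p, sum_inner, inner_sum, real_inner_smul_left, real_inner_smul_right]
      refine Finset.sum_congr rfl fun i _ => ?_
      rw [Finset.sum_eq_single i (fun j _ hji => by rw [hv hji.symm, mul_zero, mul_zero]) (by simp),
        real_inner_self_eq_norm_sq]
      ring
    rw [this]
    refine Finset.sum_le_sum fun i _ => ?_
    have : ‖v i‖ ^ 2 ≤ 1 := pow_le_one₀ (norm_nonneg _) (hv1 i)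
    nlinarith [sq_nonneg ⟪v i, x⟫_ℝ]
  nlinarith [norm_sub_sq_real x p, real_inner_comm x p, sq_nonneg ‖x - p‖]

theorem sum_norm_sq_starProjection_le_finrank (W : Submodule ℝ E) [FiniteDimensional ℝ W]
    {v : ι → E} (hv : Pairwise fun i j => ⟪v i, v j⟫_ℝ = 0) (hv1 : ∀ i, ‖v i‖ ≤ 1) :
    ∑ i, ‖W.starProjection (v i)‖ ^ 2 ≤ Module.finrank ℝ W := by
  set b := stdOrthonormalBasis ℝ W
  have hparseval : ∀ x : E, ‖W.starProjection x‖ ^ 2 = ∑ t, ⟪(b t : E), x⟫_ℝ ^ 2 := fun x => by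
    rw [W.starProjection_apply, Submodule.norm_coe, ← b.sum_sq_inner_right]
    simp_rw [Submodule.inner_orthogonalProjectionOnto_eq_of_mem_left]
  calc ∑ i, ‖W.starProjection (v i)‖ ^ 2
      = ∑ t, ∑ i, ⟪v i, (b t : E)⟫_ℝ ^ 2 := by
        simp_rw [hparseval, real_inner_comm (v _)]
        exact Finset.sum_comm
    _ ≤ ∑ t, ‖(b t : E)‖ ^ 2 :=
        Finset.sum_le_sum fun t _ => sum_inner_sq_le_norm_sq_of_pairwise_orthogonal hv hv1 _
    _ = Module.finrank ℝ W := by simp [Submodule.norm_coe, b.orthonormal.1]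

end Bessel

theorem sum_mul_le_sum_of_sum_le_card {ι : Type*} [Fintype ι] (s : Finset ι) {lam β : ι → ℝ}
    {c : ℝ} (hc : 0 ≤ c) (hs : ∀ i ∈ s, c ≤ lam i) (hsc : ∀ i ∉ s, lam i ≤ c)
    (hβ0 : ∀ i, 0 ≤ β i) (hβ1 : ∀ i, β i ≤ 1) (hβs : ∑ i, β i ≤ #s) :
    ∑ i, lam i * β i ≤ ∑ i ∈ s, lam i := by
  classical
  -- termwise, `(lamᵢ - c) (βᵢ - 1_s(i)) ≤ 0`
  have hterm : ∀ i, lam i * β i ≤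
      (if i ∈ s then lam i else 0) + c * (β i - if i ∈ s then 1 else 0) := fun i => by
    split_ifs with h
    · nlinarith [hs i h, hβ1 i]
    · nlinarith [hsc i h, hβ0 i]
  calc ∑ i, lam i * β i
      ≤ ∑ i, ((if i ∈ s then lam i else 0) + c * (β i - if i ∈ s then 1 else 0)) :=
        Finset.sum_le_sum fun i _ => hterm i
    _ = ∑ i ∈ s, lam i + c * (∑ i, β i - #s) := by
        rw [Finset.sum_add_distrib, ← Finset.mul_sum, Finset.sum_sub_distrib]
        simp [Finset.sum_ite_mem]
    _ ≤ ∑ i ∈ s, lam i := by nlinarith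

section Projection

variable {E : Type*} [NormedAddCommGroup E] [InnerProductSpace ℝ E]

theorem sum_norm_sq_starProjection_le_of_pairwise_orthogonal {n k : ℕ} (hkn : k < n)
    {z : Fin n → E} (hz : Pairwise fun i j => ⟪z i, z j⟫_ℝ = 0)
    (hanti : Antitone fun i => ‖z i‖ ^ 2) (W : Submodule ℝ E) [FiniteDimensional ℝ W]
    (hW : Module.finrank ℝ W ≤ k) :
    ∑ i, ‖W.starProjection (z i)‖ ^ 2 ≤
      ∑ i ∈ univ.filter (fun i : Fin n => (i : ℕ) < k), ‖z i‖ ^ 2 := by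
  -- `‖0‖⁻¹ = 0`, so `w i = 0` when `z i = 0`
  set w : Fin n → E := fun i => ‖z i‖⁻¹ • z i
  have hw : Pairwise fun i j => ⟪w i, w j⟫_ℝ = 0 := fun i j h => by
    simp [w, real_inner_smul_left, real_inner_smul_right, hz h]
  have hw1 : ∀ i, ‖w i‖ ≤ 1 := fun i => by
    by_cases hzi : z i = 0
    · simp [w, hzi]
    · simp [w, norm_smul, hzi]
  have hscale : ∀ i, ‖W.starProjection (z i)‖ ^ 2 = ‖z i‖ ^ 2 * ‖W.starProjection (w i)‖ ^ 2 :=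
    fun i => by
      by_cases hzi : z i = 0
      · simp [hzi]
      · simp [w, map_smul, norm_smul, mul_pow, hzi]
  simp_rw [hscale]
  refine sum_mul_le_sum_of_sum_le_card _ (c := ‖z ⟨k, hkn⟩‖ ^ 2) (sq_nonneg _)
    (fun i hi => hanti ?_) (fun i hi => hanti ?_) (fun i => sq_nonneg _)
    (fun i => pow_le_one₀ (norm_nonneg _) ((W.norm_starProjection_apply_le _).trans (hw1 i))) ?_
  · simpa [Fin.le_def] using (Finset.mem_filter.1 hi).2.le
  · simpa [Fin.le_def] using hi
  · calc ∑ i, ‖W.starProjection (w i)‖ ^ 2 ≤ Module.finrank ℝ W :=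
          sum_norm_sq_starProjection_le_finrank W hw hw1
      _ ≤ _ := by rw [Fin.card_filter_val_lt]; exact_mod_cast hW.trans (le_min hkn.le le_rfl)

theorem sum_norm_sq_le_sum_norm_sq_starProjection_orthogonal {n k : ℕ} (hkn : k < n)
    {z : Fin n → E} (hz : Pairwise fun i j => ⟪z i, z j⟫_ℝ = 0)
    (hanti : Antitone fun i => ‖z i‖ ^ 2) (W : Submodule ℝ E) [FiniteDimensional ℝ W]
    (hW : Module.finrank ℝ W ≤ k) :
    ∑ i ∈ univ.filter (fun i : Fin n => k ≤ (i : ℕ)), ‖z i‖ ^ 2 ≤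
      ∑ i, ‖Wᗮ.starProjection (z i)‖ ^ 2 := by
  have hbound := sum_norm_sq_starProjection_le_of_pairwise_orthogonal hkn hz hanti W hW
  have hsplit := Finset.sum_filter_add_sum_filter_not univ (fun i : Fin n => (i : ℕ) < k)
    fun i => ‖z i‖ ^ 2
  simp only [not_lt] at hsplit
  have hpyth : ∀ x, ‖Wᗮ.starProjection x‖ ^ 2 = ‖x‖ ^ 2 - ‖W.starProjection x‖ ^ 2 :=
    fun x => by rw [W.norm_sq_eq_add_norm_sq_starProjection x]; ring
  simp_rw [hpyth, Finset.sum_sub_distrib]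
  linarith

theorem sum_norm_sq_starProjection_orthogonal_span {ι : Type*} [Fintype ι] {z : ι → E}
    (hz : Pairwise fun i j => ⟪z i, z j⟫_ℝ = 0) (p : ι → Prop) [DecidablePred p]
    [(Submodule.span ℝ {v | ∃ i, p i ∧ v = z i}).HasOrthogonalProjection] :
    ∑ i, ‖(Submodule.span ℝ {v | ∃ i, p i ∧ v = z i})ᗮ.starProjection (z i)‖ ^ 2 =
      ∑ i ∈ univ.filter (fun i => ¬ p i), ‖z i‖ ^ 2 := by
  rw [Finset.sum_filter]
  refine Finset.sum_congr rfl fun i _ => ?_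
  split_ifs with hi
  · have hzi : z i ∈ Submodule.span ℝ {v | ∃ i, p i ∧ v = z i} :=
      Submodule.subset_span ⟨i, hi, rfl⟩
    simp [Submodule.starProjection_orthogonal_apply_eq_zero hzi]
  · have hzi : z i ∈ (Submodule.span ℝ {v | ∃ i, p i ∧ v = z i})ᗮ := by
      refine (Submodule.isOrtho_span.2 ?_).le (Submodule.subset_span rfl)
      rintro _ rfl _ ⟨l, hl, rfl⟩
      exact hz fun h => hi (h ▸ hl)
    rw [Submodule.starProjection_eq_self_iff.2 hzi]

end Projection

theorem optimality_C_general
    {H : Type*} [NormedAddCommGroup H] [InnerProductSpace ℝ H]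
    {n k : ℕ} (hkn : k < n)
    (y : Fin n → H)
    (V : Matrix (Fin n) (Fin n) ℝ)
    (hV : ∀ i j, V i j = ⟪y i, y j⟫_ℝ)
    (lam : Fin n → ℝ)
    (hlam_anti : Antitone lam)
    (u : Fin n → Fin n → ℝ)
    (hu_orth : ∀ i j, (∑ a, u i a * u j a) = if i = j then 1 else 0)
    (hu_eig : ∀ i, V.mulVec (u i) = lam i • u i)
    (z : Fin n → H)
    (hz : ∀ i, z i = ∑ j, u i j • y j)
    (W₀ : Submodule ℝ H)
    (hW₀ : W₀ = Submodule.span ℝ {v | ∃ i : Fin n, (i : ℕ) < k ∧ v = z i})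
    [FiniteDimensional ℝ W₀] :
    (∀ (W : Submodule ℝ H) [FiniteDimensional ℝ W], Module.finrank ℝ W ≤ k →
      ∑ i ∈ Finset.univ.filter (fun i : Fin n => k ≤ (i : ℕ)), lam i ≤
        ∑ i, ‖y i - (W.orthogonalProjectionOnto (y i) : H)‖ ^ 2) ∧
    ∑ i, ‖y i - (W₀.orthogonalProjectionOnto (y i) : H)‖ ^ 2 =
      ∑ i ∈ Finset.univ.filter (fun i : Fin n => k ≤ (i : ℕ)), lam i := by
  have hzz : ∀ i j, ⟪z i, z j⟫_ℝ = if i = j then lam i else 0 := fun i j => by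
    simpa only [hz] using inner_sum_smul_eq_ite_of_gram_eigenvectors hu_orth y V hV hu_eig i j
  have hz_orth : Pairwise fun i j => ⟪z i, z j⟫_ℝ = 0 := fun i j h => by simp [hzz, h]
  have hz_norm : ∀ i, ‖z i‖ ^ 2 = lam i := fun i => by
    rw [← real_inner_self_eq_norm_sq, hzz, if_pos rfl]
  refine ⟨fun W _ hW => ?_, ?_⟩
  · rw [sum_norm_sq_sub_orthogonalProjectionOnto_of_rows_orthonormal hu_orth hz W]
    simpa only [hz_norm] using sum_norm_sq_le_sum_norm_sq_starProjection_orthogonal hkn hz_orth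
      (by simpa only [hz_norm] using hlam_anti) W hW
  · subst hW₀
    rw [sum_norm_sq_sub_orthogonalProjectionOnto_of_rows_orthonormal hu_orth hz,
      sum_norm_sq_starProjection_orthogonal_span hz_orth]
    simp only [hz_norm, not_lt]

/-- Paper's Theorem 4 (Optimality C): for `y₁,…,yₙ` in a real inner product space with Gram
matrix `V` having eigenvalues `λ₁ ≥ … ≥ λₙ ≥ 0` and orthonormal eigenvectors `u₁,…,uₙ`,
every subspace `W` of dimension at most `k` satisfies
`∑ i ‖yᵢ − Π_W yᵢ‖² ≥ ∑_{i>k} λᵢ`, with equality for the span of the first `k`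
principal components `zᵢ = ∑ⱼ (uᵢ)ⱼ yⱼ`. -/
theorem optimality_C
    {H : Type*} [NormedAddCommGroup H] [InnerProductSpace ℝ H]
    {n k : ℕ} (hk : 1 ≤ k) (hkn : k < n)
    (y : Fin n → H)
    (V : Matrix (Fin n) (Fin n) ℝ)
    (hV : ∀ i j, V i j = ⟪y i, y j⟫_ℝ)
    (lam : Fin n → ℝ)
    (hlam_anti : Antitone lam)
    (hlam_nonneg : ∀ i, 0 ≤ lam i)
    (u : Fin n → Fin n → ℝ)
    (hu_orth : ∀ i j, (∑ a, u i a * u j a) = if i = j then 1 else 0)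
    (hu_eig : ∀ i, V.mulVec (u i) = lam i • u i)
    (z : Fin n → H)
    (hz : ∀ i, z i = ∑ j, u i j • y j)
    (W₀ : Submodule ℝ H)
    (hW₀ : W₀ = Submodule.span ℝ {v | ∃ i : Fin n, (i : ℕ) < k ∧ v = z i})
    [FiniteDimensional ℝ W₀] :
    (∀ (W : Submodule ℝ H) [FiniteDimensional ℝ W], Module.finrank ℝ W ≤ k →
      ∑ i ∈ Finset.univ.filter (fun i : Fin n => k ≤ (i : ℕ)), lam i ≤
        ∑ i, ‖y i - (W.orthogonalProjectionOnto (y i) : H)‖ ^ 2) ∧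
    ∑ i, ‖y i - (W₀.orthogonalProjectionOnto (y i) : H)‖ ^ 2 =
      ∑ i ∈ Finset.univ.filter (fun i : Fin n => k ≤ (i : ℕ)), lam i :=
  optimality_C_general hkn y V hV lam hlam_anti u hu_orth hu_eig z hz W₀ hW₀
end

section
/- Let H be a real inner product space, y₀ ∈ H, and y₁,…,yₙ ∈ H with positive definite Gram matrix V having eigenvalues λ₁ ≥ … ≥ λₙ > 0 and orthonormal eigenvectors u₁,…,uₙ. Let κⱼ = ⟨y₀,yⱼ⟩, α = V⁻¹κ, ŷ = Σⱼ αⱼ yⱼ (the kriging predictor, which is the orthogonal projection of y₀ onto span{y₁,…,yₙ}), and let ỹ be the orthogonal projection of y₀ onto span{z₁,…,z_k} where zᵢ = Σⱼ (uᵢ)ⱼ yⱼ and 1 ≤ k < n. Then 0 ≤ ‖y₀ − ỹ‖² − ‖y₀ − ŷ‖² ≤ ‖α‖² λ_{k+1}, where ‖α‖ is the Euclidean norm of α. -/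
/-!
The principal components are orthogonal with `‖zᵢ‖² = λᵢ`, and since the eigenvector matrix `U` is
orthogonal, `ŷ = ∑ᵢ cᵢ zᵢ` with `c = Uα` and `‖c‖ = ‖α‖`. The normal equations `Vα = κ` make
`y₀ - ŷ` orthogonal to every `zᵢ`, so projecting `y₀` onto the span of the first `k` components
just truncates this expansion, and by Pythagoras the excess error is
`∑_{i ≥ k} cᵢ² λᵢ ≤ λ_k ‖c‖²` (components indexed from `0`).
-/

open scoped InnerProductSpace
open Finset Matrix Submodule

section OrthogonalFamily

variable {H ι : Type*} [NormedAddCommGroup H] [InnerProductSpace ℝ H] [DecidableEq ι] {z : ι → H}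

theorem inner_sum_smul_left_of_pairwise (hz : Pairwise fun i j => ⟪z i, z j⟫_ℝ = 0)
    (c : ι → ℝ) (s : Finset ι) (j : ι) :
    ⟪∑ i ∈ s, c i • z i, z j⟫_ℝ = if j ∈ s then c j * ‖z j‖ ^ 2 else 0 := by
  have hterm : ∀ i, c i * ⟪z i, z j⟫_ℝ = if i = j then c j * ‖z j‖ ^ 2 else 0 := by
    intro i
    split_ifs with hij
    · rw [hij, real_inner_self_eq_norm_sq]
    · rw [hz hij, mul_zero]
  simp_rw [sum_inner, real_inner_smul_left, hterm, sum_ite_eq']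

theorem norm_sum_smul_sq_of_pairwise (hz : Pairwise fun i j => ⟪z i, z j⟫_ℝ = 0)
    (c : ι → ℝ) (s : Finset ι) :
    ‖∑ i ∈ s, c i • z i‖ ^ 2 = ∑ i ∈ s, c i ^ 2 * ‖z i‖ ^ 2 := by
  rw [← real_inner_self_eq_norm_sq, sum_inner]
  refine sum_congr rfl fun j hj => ?_
  rw [real_inner_smul_left, real_inner_comm, inner_sum_smul_left_of_pairwise hz, if_pos hj]
  ring

variable [Fintype ι] {x : H} {c : ι → ℝ}

omit [InnerProductSpace ℝ H] in
theorem sub_sum_eq_sub_sum_add_sum_compl (x : H) (f : ι → H) (s : Finset ι) :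
    x - ∑ i ∈ s, f i = (x - ∑ i, f i) + ∑ i ∈ sᶜ, f i := by
  rw [← sum_add_sum_compl s]
  abel

theorem starProjection_eq_sum_of_pairwise (hz : Pairwise fun i j => ⟪z i, z j⟫_ℝ = 0)
    (hx : ∀ j, ⟪x - ∑ i, c i • z i, z j⟫_ℝ = 0) {s : Finset ι} {K : Submodule ℝ H}
    [K.HasOrthogonalProjection] (hK : K = span ℝ (z '' s)) :
    K.starProjection x = ∑ i ∈ s, c i • z i := by
  subst hK
  refine eq_starProjection_of_mem_of_inner_eq_zero
    (sum_mem fun i hi => smul_mem _ _ (subset_span ⟨i, hi, rfl⟩)) fun w hw => ?_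
  refine (span_le (p := LinearMap.ker (innerₛₗ ℝ (x - ∑ i ∈ s, c i • z i)))).mpr ?_ hw
  rintro _ ⟨j, hj, rfl⟩
  rw [SetLike.mem_coe, LinearMap.mem_ker, innerₛₗ_apply_apply, sub_sum_eq_sub_sum_add_sum_compl,
    inner_add_left, hx, inner_sum_smul_left_of_pairwise hz, if_neg (notMem_compl.mpr hj), zero_add]

theorem norm_sub_starProjection_sq_of_pairwise (hz : Pairwise fun i j => ⟪z i, z j⟫_ℝ = 0)
    (hx : ∀ j, ⟪x - ∑ i, c i • z i, z j⟫_ℝ = 0) {s : Finset ι} {K : Submodule ℝ H}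
    [K.HasOrthogonalProjection] (hK : K = span ℝ (z '' s)) :
    ‖x - K.starProjection x‖ ^ 2 = ‖x - ∑ i, c i • z i‖ ^ 2 + ∑ i ∈ sᶜ, c i ^ 2 * ‖z i‖ ^ 2 := by
  have horth : ⟪x - ∑ i, c i • z i, ∑ i ∈ sᶜ, c i • z i⟫_ℝ = 0 := by
    simp_rw [inner_sum, real_inner_smul_right, hx, mul_zero, sum_const_zero]
  rw [starProjection_eq_sum_of_pairwise hz hx hK, sub_sum_eq_sub_sum_add_sum_compl,
    norm_add_sq_real, horth, norm_sum_smul_sq_of_pairwise hz]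
  ring

end OrthogonalFamily

section Gram

variable {H ι : Type*} [NormedAddCommGroup H] [InnerProductSpace ℝ H]

theorem transpose_gram_real (y : ι → H) : (gram ℝ y)ᵀ = gram ℝ y :=
  Matrix.ext fun i j => real_inner_comm (y i) (y j)

variable [Fintype ι] {y : ι → H}

theorem inner_sum_smul_eq_mul_dotProduct_of_mulVec_eq_smul {v : ι → ℝ} {μ : ℝ}
    (hv : gram ℝ y *ᵥ v = μ • v) (w : ι → ℝ) :
    ⟪∑ j, w j • y j, ∑ j, v j • y j⟫_ℝ = μ * (w ⬝ᵥ v) := by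
  rw [← star_dotProduct_gram_mulVec, star_trivial, hv, dotProduct_smul, smul_eq_mul]

theorem inner_sum_smul_eigenvectors [DecidableEq ι] {u : ι → ι → ℝ} {lam : ι → ℝ}
    (hu_orth : ∀ i j, u i ⬝ᵥ u j = if i = j then 1 else 0)
    (hu_eig : ∀ i, gram ℝ y *ᵥ u i = lam i • u i) (i j : ι) :
    ⟪∑ a, u i a • y a, ∑ a, u j a • y a⟫_ℝ = if i = j then lam j else 0 := by
  rw [inner_sum_smul_eq_mul_dotProduct_of_mulVec_eq_smul (hu_eig j), hu_orth, mul_ite, mul_one,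
    mul_zero]

theorem inner_sub_sum_smul_eq_zero_of_gram_mulVec {x : H} {α : ι → ℝ}
    (hα : gram ℝ y *ᵥ α = fun j => ⟪x, y j⟫_ℝ) (b : ι → ℝ) :
    ⟪x - ∑ j, α j • y j, ∑ j, b j • y j⟫_ℝ = 0 := by
  have hx : ⟪x, ∑ j, b j • y j⟫_ℝ = (gram ℝ y *ᵥ α) ⬝ᵥ b := by
    simp_rw [hα, inner_sum, real_inner_smul_right, dotProduct, mul_comm]
  rw [inner_sub_left, hx, ← star_dotProduct_gram_mulVec, star_trivial, dotProduct_mulVec,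
    ← mulVec_transpose, transpose_gram_real, sub_self]

end Gram

section OrthogonalMatrix

variable {ι : Type*} [Fintype ι] [DecidableEq ι] {U : Matrix ι ι ℝ}

theorem vecMul_mulVec_of_transpose_mul_self (hU : Uᵀ * U = 1) (a : ι → ℝ) :
    (U *ᵥ a) ᵥ* U = a := by
  rw [← vecMul_transpose, vecMul_vecMul, hU, vecMul_one]

theorem sum_mulVec_smul_sum_smul {M : Type*} [AddCommGroup M] [Module ℝ M] (hU : Uᵀ * U = 1)
    (a : ι → ℝ) (y : ι → M) : ∑ i, (U *ᵥ a) i • ∑ j, U i j • y j = ∑ j, a j • y j := by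
  have hcoeff : ∀ j, ∑ i, (U *ᵥ a) i * U i j = a j :=
    congrFun (vecMul_mulVec_of_transpose_mul_self hU a)
  simp_rw [smul_sum, smul_smul]
  rw [sum_comm]
  simp_rw [← sum_smul, hcoeff]

theorem sum_mulVec_sq (hU : Uᵀ * U = 1) (a : ι → ℝ) : ∑ i, (U *ᵥ a) i ^ 2 = ∑ i, a i ^ 2 := by
  simp_rw [sq]
  change (U *ᵥ a) ⬝ᵥ (U *ᵥ a) = a ⬝ᵥ a
  rw [dotProduct_mulVec, vecMul_mulVec_of_transpose_mul_self hU]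

end OrthogonalMatrix

theorem sum_compl_sq_mul_le {ι : Type*} [Fintype ι] [DecidableEq ι] {s : Finset ι}
    (c w : ι → ℝ) {M : ℝ} (hM : 0 ≤ M) (hw : ∀ i ∉ s, w i ≤ M) :
    ∑ i ∈ sᶜ, c i ^ 2 * w i ≤ (∑ i, c i ^ 2) * M :=
  calc ∑ i ∈ sᶜ, c i ^ 2 * w i ≤ ∑ i ∈ sᶜ, c i ^ 2 * M :=
        sum_le_sum fun i hi => mul_le_mul_of_nonneg_left (hw i (mem_compl.mp hi)) (sq_nonneg _)
    _ = (∑ i ∈ sᶜ, c i ^ 2) * M := (sum_mul _ _ _).symm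
    _ ≤ (∑ i, c i ^ 2) * M :=
        mul_le_mul_of_nonneg_right (sum_le_univ_sum_of_nonneg fun _ => sq_nonneg _) hM

theorem pseudo_kriging_error_bound_general
    {H : Type*} [NormedAddCommGroup H] [InnerProductSpace ℝ H]
    {n k : ℕ} (hkn : k < n)
    (y₀ : H) (y : Fin n → H)
    (V : Matrix (Fin n) (Fin n) ℝ)
    (hV : ∀ i j, V i j = ⟪y i, y j⟫_ℝ)
    (lam : Fin n → ℝ)
    (hlam_anti : Antitone lam)
    (u : Fin n → Fin n → ℝ)
    (hu_orth : ∀ i j, (∑ a, u i a * u j a) = if i = j then 1 else 0)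
    (hu_eig : ∀ i, V.mulVec (u i) = lam i • u i)
    (κ : Fin n → ℝ)
    (hκ : ∀ j, κ j = ⟪y₀, y j⟫_ℝ)
    (α : Fin n → ℝ)
    (hα : V.mulVec α = κ)
    (yhat : H)
    (hyhat : yhat = ∑ j, α j • y j)
    (z : Fin n → H)
    (hz : ∀ i, z i = ∑ j, u i j • y j)
    (W₀ : Submodule ℝ H)
    (hW₀ : W₀ = Submodule.span ℝ {v | ∃ i : Fin n, (i : ℕ) < k ∧ v = z i})
    [FiniteDimensional ℝ W₀]
    (ytilde : H)
    (hytilde : ytilde = (W₀.orthogonalProjectionOnto y₀ : H)) :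
    0 ≤ ‖y₀ - ytilde‖ ^ 2 - ‖y₀ - yhat‖ ^ 2 ∧
    ‖y₀ - ytilde‖ ^ 2 - ‖y₀ - yhat‖ ^ 2 ≤ (∑ j, (α j) ^ 2) * lam ⟨k, hkn⟩ := by
  obtain rfl : V = gram ℝ y := Matrix.ext hV
  obtain rfl : κ = fun j => ⟪y₀, y j⟫_ℝ := funext hκ
  have hz_inner : ∀ i j, ⟪z i, z j⟫_ℝ = if i = j then lam j else 0 := fun i j => by
    rw [hz, hz]
    exact inner_sum_smul_eigenvectors hu_orth hu_eig i j
  have hz_orth : Pairwise fun i j => ⟪z i, z j⟫_ℝ = 0 := fun i j hij =>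
    (hz_inner i j).trans (if_neg hij)
  have hz_norm : ∀ i, ‖z i‖ ^ 2 = lam i := fun i => by
    rw [← real_inner_self_eq_norm_sq, hz_inner, if_pos rfl]
  have hU : (Matrix.of u)ᵀ * Matrix.of u = 1 :=
    mul_eq_one_comm.mp (Matrix.ext fun i j => hu_orth i j)
  set c := Matrix.of u *ᵥ α
  have hyhat_z : yhat = ∑ i, c i • z i := by
    simp_rw [hyhat, hz]
    exact (sum_mulVec_smul_sum_smul hU α y).symm
  have hres : ∀ j, ⟪y₀ - ∑ i, c i • z i, z j⟫_ℝ = 0 := fun j => by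
    rw [← hyhat_z, hyhat, hz]
    exact inner_sub_sum_smul_eq_zero_of_gram_mulVec hα (u j)
  set s := univ.filter fun i : Fin n => (i : ℕ) < k
  have hW : W₀ = span ℝ (z '' s) := by
    rw [hW₀]
    congr 1
    ext v
    simp [s, eq_comm]
  have herr : ‖y₀ - ytilde‖ ^ 2 - ‖y₀ - yhat‖ ^ 2 = ∑ i ∈ sᶜ, c i ^ 2 * lam i := by
    rw [hytilde, ← starProjection_apply, norm_sub_starProjection_sq_of_pairwise hz_orth hres hW,
      ← hyhat_z, add_sub_cancel_left]
    simp_rw [hz_norm]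
  rw [herr, ← sum_mulVec_sq hU α]
  have hlam_nonneg : ∀ i, 0 ≤ lam i := fun i => hz_norm i ▸ sq_nonneg _
  refine ⟨sum_nonneg fun i _ => mul_nonneg (sq_nonneg _) (hlam_nonneg i),
    sum_compl_sq_mul_le c lam (hlam_nonneg _) fun i hi => hlam_anti ?_⟩
  simpa [s, Fin.le_def] using hi

/-- Error bound of the paper's Theorem 2: comparing pseudo-kriging (projection onto the span of
the first `k` principal components) with exact kriging (`ŷ = ∑ⱼ αⱼ yⱼ`, `α = V⁻¹κ`):
`0 ≤ ‖y₀ − ỹ‖² − ‖y₀ − ŷ‖² ≤ ‖α‖² λ_{k+1}`. -/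
theorem pseudo_kriging_error_bound
    {H : Type*} [NormedAddCommGroup H] [InnerProductSpace ℝ H]
    {n k : ℕ} (hk : 1 ≤ k) (hkn : k < n)
    (y₀ : H) (y : Fin n → H)
    (V : Matrix (Fin n) (Fin n) ℝ)
    (hV : ∀ i j, V i j = ⟪y i, y j⟫_ℝ)
    (hVpd : V.PosDef)
    (lam : Fin n → ℝ)
    (hlam_anti : Antitone lam)
    (hlam_pos : ∀ i, 0 < lam i)
    (u : Fin n → Fin n → ℝ)
    (hu_orth : ∀ i j, (∑ a, u i a * u j a) = if i = j then 1 else 0)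
    (hu_eig : ∀ i, V.mulVec (u i) = lam i • u i)
    (κ : Fin n → ℝ)
    (hκ : ∀ j, κ j = ⟪y₀, y j⟫_ℝ)
    (α : Fin n → ℝ)
    (hα : V.mulVec α = κ)
    (yhat : H)
    (hyhat : yhat = ∑ j, α j • y j)
    (z : Fin n → H)
    (hz : ∀ i, z i = ∑ j, u i j • y j)
    (W₀ : Submodule ℝ H)
    (hW₀ : W₀ = Submodule.span ℝ {v | ∃ i : Fin n, (i : ℕ) < k ∧ v = z i})
    [FiniteDimensional ℝ W₀]
    (ytilde : H)
    (hytilde : ytilde = (W₀.orthogonalProjectionOnto y₀ : H)) :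
    0 ≤ ‖y₀ - ytilde‖ ^ 2 - ‖y₀ - yhat‖ ^ 2 ∧
    ‖y₀ - ytilde‖ ^ 2 - ‖y₀ - yhat‖ ^ 2 ≤ (∑ j, (α j) ^ 2) * lam ⟨k, hkn⟩ :=
  pseudo_kriging_error_bound_general hkn y₀ y V hV lam hlam_anti u hu_orth hu_eig κ hκ α hα yhat
    hyhat z hz W₀ hW₀ ytilde hytilde
end

section
/- With D ⊂ ℝ^d compact, H a real Hilbert space, y : D → H continuous, K(s,x) = ⟨y(s),y(x)⟩ with K(x,x) > 0 for all x ∈ D, let Ω ⊆ D be measurable, s₀ ∈ Ω, δ = Δ(Ω), and let W be a closed subspace of H. Then c(δ)·|Ω|·‖y(s₀) − Π_W y(s₀)‖² ≤ 2∫_Ω ‖y(s) − Π_W y(s)‖² ds + 2(1 − c(δ))∫_Ω K(s,s) ds. -/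
open scoped InnerProductSpace
open MeasureTheory

/-!
Fix `s ∈ Ω` and put `λ = K(s,s₀)/K(s₀,s₀)`. Since `I − Π_W` is linear and contractive,
`λ (y(s₀) − Π_W y(s₀))` is within `‖y(s) − λ y(s₀)‖` of `y(s) − Π_W y(s)`, and
`‖y(s) − λ y(s₀)‖² = K(s,s) − K(s,s₀)²/K(s₀,s₀) ≤ (1 − c(δ)) K(s,s)`, because `c(δ)` bounds both
`(K(s,s₀)/K(s₀,s₀))²` and `(K(s₀,s)/K(s,s))²`, hence also their geometric mean. With `c(δ) ≤ λ²`
this gives the inequality pointwise in `s`; integrating over `Ω` finishes the proof.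
-/

theorem le_sq_div_mul_of_le_sq_div {c a b k : ℝ} (hb : 0 < b) (hk : 0 < k)
    (hcb : c ≤ (a / b) ^ 2) (hck : c ≤ (a / k) ^ 2) : c ≤ a ^ 2 / (b * k) := by
  rcases le_or_gt c 0 with hc | hc
  · exact hc.trans (by positivity)
  have hprod : c ^ 2 ≤ (a ^ 2 / (b * k)) ^ 2 := by
    calc c ^ 2 = c * c := sq c
      _ ≤ (a / b) ^ 2 * (a / k) ^ 2 := mul_le_mul hcb hck hc.le (sq_nonneg _)
      _ = (a ^ 2 / (b * k)) ^ 2 := by field_simp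
  exact le_of_sq_le_sq hprod (by positivity)

section InnerProductSpace

variable {H : Type*} [NormedAddCommGroup H] [InnerProductSpace ℝ H]

theorem sq_mul_norm_sub_starProjection_le (W : Submodule ℝ H) [W.HasOrthogonalProjection]
    (v w : H) (r : ℝ) :
    r ^ 2 * ‖w - W.starProjection w‖ ^ 2 ≤
      2 * ‖v - W.starProjection v‖ ^ 2 + 2 * ‖v - r • w‖ ^ 2 := by
  have hsplit : r • (w - W.starProjection w) =
      (v - W.starProjection v) - Wᗮ.starProjection (v - r • w) := by
    simp only [Submodule.starProjection_orthogonal_val, map_sub, map_smul, smul_sub]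
    abel
  have hle : |r| * ‖w - W.starProjection w‖ ≤ ‖v - W.starProjection v‖ + ‖v - r • w‖ := by
    calc |r| * ‖w - W.starProjection w‖ = ‖r • (w - W.starProjection w)‖ := by
          rw [norm_smul, Real.norm_eq_abs]
      _ ≤ ‖v - W.starProjection v‖ + ‖Wᗮ.starProjection (v - r • w)‖ := by
          rw [hsplit]; exact norm_sub_le _ _
      _ ≤ ‖v - W.starProjection v‖ + ‖v - r • w‖ := by
          gcongr; exact Wᗮ.norm_starProjection_apply_le _
  have hsq := pow_le_pow_left₀ (by positivity) hle 2
  rw [mul_pow, sq_abs] at hsq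
  nlinarith [sq_nonneg (‖v - W.starProjection v‖ - ‖v - r • w‖)]

theorem norm_sub_inner_div_smul_sq (v w : H) :
    ‖v - (⟪v, w⟫_ℝ / ‖w‖ ^ 2) • w‖ ^ 2 = ‖v‖ ^ 2 - ⟪v, w⟫_ℝ ^ 2 / ‖w‖ ^ 2 := by
  rcases eq_or_ne w 0 with rfl | hw
  · simp
  have hw' : ‖w‖ ≠ 0 := norm_ne_zero_iff.mpr hw
  rw [norm_sub_sq_real, inner_smul_right, norm_smul, Real.norm_eq_abs, mul_pow, sq_abs]
  field_simp
  ring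

theorem mul_norm_sub_starProjection_sq_le (W : Submodule ℝ H) [W.HasOrthogonalProjection]
    {a b : H} (ha : a ≠ 0) (hb : b ≠ 0) {c : ℝ}
    (hcb : c ≤ (⟪a, b⟫_ℝ / ‖b‖ ^ 2) ^ 2) (hca : c ≤ (⟪b, a⟫_ℝ / ‖a‖ ^ 2) ^ 2) :
    c * ‖b - W.starProjection b‖ ^ 2 ≤
      2 * ‖a - W.starProjection a‖ ^ 2 + 2 * (1 - c) * ‖a‖ ^ 2 := by
  have ha2 : 0 < ‖a‖ ^ 2 := by positivity
  have hb2 : 0 < ‖b‖ ^ 2 := by positivity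
  rw [real_inner_comm] at hca
  have hc : c * ‖a‖ ^ 2 ≤ ⟪a, b⟫_ℝ ^ 2 / ‖b‖ ^ 2 := by
    have := le_sq_div_mul_of_le_sq_div hb2 ha2 hcb hca
    rw [le_div_iff₀ (by positivity), ← mul_assoc] at this
    rw [le_div_iff₀ hb2]
    linarith [mul_right_comm c (‖b‖ ^ 2) (‖a‖ ^ 2)]
  have hres : ‖a - (⟪a, b⟫_ℝ / ‖b‖ ^ 2) • b‖ ^ 2 ≤ (1 - c) * ‖a‖ ^ 2 := by
    rw [norm_sub_inner_div_smul_sq]; linarith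
  calc c * ‖b - W.starProjection b‖ ^ 2
      ≤ (⟪a, b⟫_ℝ / ‖b‖ ^ 2) ^ 2 * ‖b - W.starProjection b‖ ^ 2 := by gcongr
    _ ≤ 2 * ‖a - W.starProjection a‖ ^ 2 + 2 * ‖a - (⟪a, b⟫_ℝ / ‖b‖ ^ 2) • b‖ ^ 2 :=
        sq_mul_norm_sub_starProjection_le W a b _
    _ ≤ 2 * ‖a - W.starProjection a‖ ^ 2 + 2 * (1 - c) * ‖a‖ ^ 2 := by linarith

end InnerProductSpace

theorem lemma1_upper_general
    {d : ℕ} {H : Type*} [NormedAddCommGroup H] [InnerProductSpace ℝ H]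
    (D : Set (EuclideanSpace ℝ (Fin d))) (hD : IsCompact D)
    (y : EuclideanSpace ℝ (Fin d) → H) (hy : ContinuousOn y D)
    (K : EuclideanSpace ℝ (Fin d) → EuclideanSpace ℝ (Fin d) → ℝ)
    (hK : ∀ s x, K s x = ⟪y s, y x⟫_ℝ)
    (hKpos : ∀ x ∈ D, 0 < K x x)
    (c : ℝ → ℝ)
    (hc : ∀ δ, c δ =
      sInf {r : ℝ | ∃ x₁ ∈ D, ∃ x₂ ∈ D, dist x₁ x₂ ≤ δ ∧ r = (K x₁ x₂ / K x₂ x₂) ^ 2})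
    (Ω : Set (EuclideanSpace ℝ (Fin d))) (hΩD : Ω ⊆ D) (hΩ : MeasurableSet Ω)
    (s₀ : EuclideanSpace ℝ (Fin d)) (hs₀ : s₀ ∈ Ω)
    (W : Submodule ℝ H) [W.HasOrthogonalProjection] :
    c (Metric.diam Ω) * (volume Ω).toReal * ‖y s₀ - (W.orthogonalProjectionOnto (y s₀) : H)‖ ^ 2 ≤
      2 * (∫ s in Ω, ‖y s - (W.orthogonalProjectionOnto (y s) : H)‖ ^ 2) +
        2 * (1 - c (Metric.diam Ω)) * ∫ s in Ω, K s s := by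
  simp only [Submodule.coe_orthogonalProjectionOnto_apply]
  have hΩbdd : Bornology.IsBounded Ω := hD.isBounded.subset hΩD
  have hy_ne : ∀ x ∈ D, y x ≠ 0 := fun x hx hyx => by simpa [hK, hyx] using hKpos x hx
  have hK_diag : ∀ s, K s s = ‖y s‖ ^ 2 := fun s => by rw [hK, real_inner_self_eq_norm_sq]
  have hc_le : ∀ x₁ ∈ Ω, ∀ x₂ ∈ Ω, c (Metric.diam Ω) ≤ (⟪y x₁, y x₂⟫_ℝ / ‖y x₂‖ ^ 2) ^ 2 := by
    intro x₁ h₁ x₂ h₂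
    rw [hc, ← hK, ← hK_diag]
    exact csInf_le ⟨0, by rintro _ ⟨_, _, _, _, _, rfl⟩; positivity⟩
      ⟨x₁, hΩD h₁, x₂, hΩD h₂, Metric.dist_le_diam_of_mem hΩbdd h₁ h₂, rfl⟩
  have hpointwise : ∀ s ∈ Ω, c (Metric.diam Ω) * ‖y s₀ - W.starProjection (y s₀)‖ ^ 2 ≤
      2 * ‖y s - W.starProjection (y s)‖ ^ 2 + 2 * (1 - c (Metric.diam Ω)) * K s s := by
    intro s hs
    rw [hK_diag]
    exact mul_norm_sub_starProjection_sq_le W (hy_ne s (hΩD hs)) (hy_ne s₀ (hΩD hs₀))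
      (hc_le s hs s₀ hs₀) (hc_le s₀ hs₀ s hs)
  have hres_int : IntegrableOn (fun s => ‖y s - W.starProjection (y s)‖ ^ 2) Ω :=
    (((hy.sub (W.starProjection.continuous.comp_continuousOn hy)).norm.pow 2).integrableOn_compact
      hD).mono_set hΩD
  have hK_int : IntegrableOn (fun s => K s s) Ω := by
    simp only [hK_diag]
    exact ((hy.norm.pow 2).integrableOn_compact hD).mono_set hΩD
  have hint := setIntegral_ge_of_const_le_real hΩ hΩbdd.measure_lt_top.ne hpointwise
    ((hres_int.const_mul 2).add (hK_int.const_mul _))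
  rw [integral_add (hres_int.const_mul 2) (hK_int.const_mul _), integral_const_mul,
    integral_const_mul] at hint
  rw [mul_right_comm]
  exact hint

/-- Upper inequality of the paper's Lemma 1:
`c(δ)·|Ω|·‖y(s₀) − Π_W y(s₀)‖² ≤ 2∫_Ω ‖y(s) − Π_W y(s)‖² ds + 2(1 − c(δ))∫_Ω K(s,s) ds`,
where `δ = Δ(Ω)` is the diameter of `Ω` and
`c(δ) = inf{(K(x₁,x₂)/K(x₂,x₂))² : x₁,x₂ ∈ D, ‖x₁−x₂‖ ≤ δ}`. -/
theorem lemma1_upper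
    {d : ℕ} {H : Type*} [NormedAddCommGroup H] [InnerProductSpace ℝ H] [CompleteSpace H]
    (D : Set (EuclideanSpace ℝ (Fin d))) (hD : IsCompact D)
    (y : EuclideanSpace ℝ (Fin d) → H) (hy : ContinuousOn y D)
    (K : EuclideanSpace ℝ (Fin d) → EuclideanSpace ℝ (Fin d) → ℝ)
    (hK : ∀ s x, K s x = ⟪y s, y x⟫_ℝ)
    (hKpos : ∀ x ∈ D, 0 < K x x)
    (c : ℝ → ℝ)
    (hc : ∀ δ, c δ =
      sInf {r : ℝ | ∃ x₁ ∈ D, ∃ x₂ ∈ D, dist x₁ x₂ ≤ δ ∧ r = (K x₁ x₂ / K x₂ x₂) ^ 2})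
    (Ω : Set (EuclideanSpace ℝ (Fin d))) (hΩD : Ω ⊆ D) (hΩ : MeasurableSet Ω)
    (s₀ : EuclideanSpace ℝ (Fin d)) (hs₀ : s₀ ∈ Ω)
    (W : Submodule ℝ H) (hWclosed : IsClosed (W : Set H)) [W.HasOrthogonalProjection] :
    c (Metric.diam Ω) * (volume Ω).toReal * ‖y s₀ - (W.orthogonalProjectionOnto (y s₀) : H)‖ ^ 2 ≤
      2 * (∫ s in Ω, ‖y s - (W.orthogonalProjectionOnto (y s) : H)‖ ^ 2) +
        2 * (1 - c (Metric.diam Ω)) * ∫ s in Ω, K s s :=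
  lemma1_upper_general D hD y hy K hK hKpos c hc Ω hΩD hΩ s₀ hs₀ W
end

section
/- With D ⊂ ℝ^d compact, H a real Hilbert space, y : D → H continuous, K(s,x) = ⟨y(s),y(x)⟩ with K(x,x) > 0 for all x ∈ D, let Ω ⊆ D be measurable, s₀ ∈ Ω, δ = Δ(Ω), and let W be a closed subspace of H. Then (1/2)∫_Ω ‖y(s) − Π_W y(s)‖² ds − (1 − c(δ))∫_Ω K(s,s) ds ≤ c(δ)·|Ω|·‖y(s₀) − Π_W y(s₀)‖². -/
/-!
Fix `s ∈ Ω`, put `a = y s`, `b = y s₀` and `c = c(Δ(Ω))`. The definition of `c` gives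
`c ‖a‖⁴ ≤ ⟨a, b⟩²` and `c ‖b‖⁴ ≤ ⟨a, b⟩²`, so for `t = ±√c` (sign of `⟨a, b⟩`) the cross term of
`‖a - t b‖²` absorbs `c ‖b‖²` and `c ‖a‖²`, leaving `‖a - t b‖² ≤ (1 - c) ‖a‖²`. Since `t Π_W b ∈ W`,
`‖a - Π_W a‖ ≤ ‖a - t b‖ + |t| ‖b - Π_W b‖`, and squaring gives the pointwise inequality
`½ ‖a - Π_W a‖² - (1 - c) K(s, s) ≤ c ‖b - Π_W b‖²`, which is then integrated over `Ω`.
-/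

open scoped InnerProductSpace
open MeasureTheory

lemma mul_sq_le_sq_of_le_div_sq {c t u : ℝ} (h : c ≤ (t / u) ^ 2) : c * u ^ 2 ≤ t ^ 2 := by
  rcases eq_or_ne u 0 with rfl | hu
  · simpa using sq_nonneg t
  · rwa [div_pow, le_div_iff₀ (by positivity)] at h

theorem setIntegral_le_of_le_const_real {X : Type*} [MeasurableSpace X] {μ : Measure X}
    {s : Set X} {f : X → ℝ} {c : ℝ} (hs : MeasurableSet s) (hμs : μ s ≠ ⊤)
    (hf : ∀ x ∈ s, f x ≤ c) (hfint : IntegrableOn f s μ) :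
    ∫ x in s, f x ∂μ ≤ c * μ.real s := by
  rw [mul_comm, ← smul_eq_mul, ← setIntegral_const]
  exact setIntegral_mono_on hfint (integrableOn_const hμs) hs hf

section InnerProductSpace

variable {H : Type*} [NormedAddCommGroup H] [InnerProductSpace ℝ H]

lemma norm_sub_sqrt_smul_sq_le {a b : H} {c : ℝ} (hc : 0 ≤ c) (hab : 0 ≤ ⟪a, b⟫_ℝ)
    (ha : c * (‖a‖ ^ 2) ^ 2 ≤ ⟪a, b⟫_ℝ ^ 2) (hb : c * (‖b‖ ^ 2) ^ 2 ≤ ⟪a, b⟫_ℝ ^ 2) :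
    ‖a - √c • b‖ ^ 2 ≤ (1 - c) * ‖a‖ ^ 2 := by
  have hsq : √c ^ 2 = c := Real.sq_sqrt hc
  have hσa : √c * ‖a‖ ^ 2 ≤ ⟪a, b⟫_ℝ := le_of_sq_le_sq (by rwa [mul_pow, hsq]) hab
  have hσb : √c * ‖b‖ ^ 2 ≤ ⟪a, b⟫_ℝ := le_of_sq_le_sq (by rwa [mul_pow, hsq]) hab
  rw [norm_sub_sq_real, real_inner_smul_right, norm_smul, Real.norm_of_nonneg (Real.sqrt_nonneg c),
    mul_pow, hsq]
  nlinarith [mul_le_mul_of_nonneg_left hσa (Real.sqrt_nonneg c),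
    mul_le_mul_of_nonneg_left hσb (Real.sqrt_nonneg c)]

lemma exists_sq_eq_norm_sub_smul_sq_le {a b : H} {c : ℝ} (hc : 0 ≤ c)
    (ha : c * (‖a‖ ^ 2) ^ 2 ≤ ⟪a, b⟫_ℝ ^ 2) (hb : c * (‖b‖ ^ 2) ^ 2 ≤ ⟪a, b⟫_ℝ ^ 2) :
    ∃ t : ℝ, t ^ 2 = c ∧ ‖a - t • b‖ ^ 2 ≤ (1 - c) * ‖a‖ ^ 2 := by
  rcases le_total 0 ⟪a, b⟫_ℝ with hab | hab
  · exact ⟨√c, Real.sq_sqrt hc, norm_sub_sqrt_smul_sq_le hc hab ha hb⟩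
  · refine ⟨-√c, by rw [neg_sq, Real.sq_sqrt hc], ?_⟩
    have h := norm_sub_sqrt_smul_sq_le (b := -b) hc (by rw [inner_neg_right]; linarith)
      (by rwa [inner_neg_right, neg_sq]) (by rwa [norm_neg, inner_neg_right, neg_sq])
    rwa [smul_neg, ← neg_smul] at h

variable (W : Submodule ℝ H) [W.HasOrthogonalProjection]

lemma norm_sub_starProjection_le_of_mem (a : H) {w : H} (hw : w ∈ W) :
    ‖a - W.starProjection a‖ ≤ ‖a - w‖ := by
  rw [Submodule.starProjection_minimal]
  exact ciInf_le ⟨0, by rintro _ ⟨v, rfl⟩; positivity⟩ (⟨w, hw⟩ : W)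

lemma norm_sub_starProjection_le_add_smul (a b : H) (t : ℝ) :
    ‖a - W.starProjection a‖ ≤ ‖a - t • b‖ + |t| * ‖b - W.starProjection b‖ :=
  calc ‖a - W.starProjection a‖ ≤ ‖a - t • W.starProjection b‖ :=
        norm_sub_starProjection_le_of_mem W a (W.smul_mem t (W.starProjection_apply_mem b))
    _ = ‖(a - t • b) + t • (b - W.starProjection b)‖ := by rw [smul_sub]; abel_nf
    _ ≤ ‖a - t • b‖ + |t| * ‖b - W.starProjection b‖ := by
        rw [← Real.norm_eq_abs, ← norm_smul]; exact norm_add_le _ _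

lemma half_norm_sub_starProjection_sq_le {a b : H} {c : ℝ} (hc : 0 ≤ c)
    (ha : c * (‖a‖ ^ 2) ^ 2 ≤ ⟪a, b⟫_ℝ ^ 2) (hb : c * (‖b‖ ^ 2) ^ 2 ≤ ⟪a, b⟫_ℝ ^ 2) :
    1 / 2 * ‖a - W.starProjection a‖ ^ 2 ≤ (1 - c) * ‖a‖ ^ 2 + c * ‖b - W.starProjection b‖ ^ 2 := by
  obtain ⟨t, rfl, hsmul⟩ := exists_sq_eq_norm_sub_smul_sq_le hc ha hb
  have hsq : ‖a - W.starProjection a‖ ^ 2 ≤ (‖a - t • b‖ + |t| * ‖b - W.starProjection b‖) ^ 2 :=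
    pow_le_pow_left₀ (norm_nonneg _) (norm_sub_starProjection_le_add_smul W a b t) 2
  nlinarith [add_sq_le (a := ‖a - t • b‖) (b := |t| * ‖b - W.starProjection b‖), sq_abs t]

end InnerProductSpace

theorem lemma1_lower_general
    {d : ℕ} {H : Type*} [NormedAddCommGroup H] [InnerProductSpace ℝ H]
    (D : Set (EuclideanSpace ℝ (Fin d))) (hD : IsCompact D)
    (y : EuclideanSpace ℝ (Fin d) → H) (hy : ContinuousOn y D)
    (K : EuclideanSpace ℝ (Fin d) → EuclideanSpace ℝ (Fin d) → ℝ)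
    (hK : ∀ s x, K s x = ⟪y s, y x⟫_ℝ)
    (c : ℝ → ℝ)
    (hc : ∀ δ, c δ =
      sInf {r : ℝ | ∃ x₁ ∈ D, ∃ x₂ ∈ D, dist x₁ x₂ ≤ δ ∧ r = (K x₁ x₂ / K x₂ x₂) ^ 2})
    (Ω : Set (EuclideanSpace ℝ (Fin d))) (hΩD : Ω ⊆ D) (hΩ : MeasurableSet Ω)
    (s₀ : EuclideanSpace ℝ (Fin d)) (hs₀ : s₀ ∈ Ω)
    (W : Submodule ℝ H) [W.HasOrthogonalProjection] :
    (1 / 2) * (∫ s in Ω, ‖y s - (Submodule.orthogonalProjectionOnto W (y s) : H)‖ ^ 2) -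
        (1 - c (Metric.diam Ω)) * (∫ s in Ω, K s s) ≤
      c (Metric.diam Ω) * (volume Ω).toReal *
        ‖y s₀ - (Submodule.orthogonalProjectionOnto W (y s₀) : H)‖ ^ 2 := by
  simp only [← Submodule.starProjection_apply]
  have hc0 : 0 ≤ c (Metric.diam Ω) := by
    rw [hc]; exact Real.sInf_nonneg (by rintro _ ⟨-, -, -, -, -, rfl⟩; positivity)
  have hcK : ∀ x₁ ∈ Ω, ∀ x₂ ∈ Ω, c (Metric.diam Ω) * K x₂ x₂ ^ 2 ≤ K x₁ x₂ ^ 2 :=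
    fun x₁ h₁ x₂ h₂ ↦ mul_sq_le_sq_of_le_div_sq <| by
      rw [hc]
      exact csInf_le ⟨0, by rintro _ ⟨-, -, -, -, -, rfl⟩; positivity⟩ ⟨x₁, hΩD h₁, x₂, hΩD h₂,
        Metric.dist_le_diam_of_mem (hD.isBounded.subset hΩD) h₁ h₂, rfl⟩
  have hpointwise : ∀ s ∈ Ω, 1 / 2 * ‖y s - W.starProjection (y s)‖ ^ 2 -
      (1 - c (Metric.diam Ω)) * K s s ≤ c (Metric.diam Ω) * ‖y s₀ - W.starProjection (y s₀)‖ ^ 2 := by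
    intro s hs
    have h := half_norm_sub_starProjection_sq_le W (a := y s) (b := y s₀) hc0
      (by rw [real_inner_comm]; simpa only [hK, real_inner_self_eq_norm_sq] using hcK s₀ hs₀ s hs)
      (by simpa only [hK, real_inner_self_eq_norm_sq] using hcK s hs s₀ hs₀)
    rw [hK, real_inner_self_eq_norm_sq]
    linarith
  have hintP : IntegrableOn (fun s ↦ ‖y s - W.starProjection (y s)‖ ^ 2) Ω :=
    (((hy.sub (W.starProjection.continuous.comp_continuousOn hy)).norm.pow 2).integrableOn_compact
      hD).mono_set hΩD
  have hintK : IntegrableOn (fun s ↦ K s s) Ω :=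
    (((hy.inner hy).congr fun s _ ↦ hK s s).integrableOn_compact hD).mono_set hΩD
  rw [← integral_const_mul, ← integral_const_mul, ← integral_sub (hintP.const_mul _)
    (hintK.const_mul _), mul_right_comm, ← measureReal_def]
  exact setIntegral_le_of_le_const_real hΩ
    ((measure_mono hΩD).trans_lt hD.measure_lt_top).ne hpointwise
    ((hintP.const_mul _).sub (hintK.const_mul _))

/-- Lower inequality of the paper's Lemma 1:
`(1/2)∫_Ω ‖y(s) − Π_W y(s)‖² ds − (1 − c(δ))∫_Ω K(s,s) ds ≤ c(δ)·|Ω|·‖y(s₀) − Π_W y(s₀)‖²`,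
where `δ = Δ(Ω)` is the diameter of `Ω` and
`c(δ) = inf{(K(x₁,x₂)/K(x₂,x₂))² : x₁,x₂ ∈ D, ‖x₁−x₂‖ ≤ δ}`. -/
theorem lemma1_lower
    {d : ℕ} {H : Type*} [NormedAddCommGroup H] [InnerProductSpace ℝ H] [CompleteSpace H]
    (D : Set (EuclideanSpace ℝ (Fin d))) (hD : IsCompact D)
    (y : EuclideanSpace ℝ (Fin d) → H) (hy : ContinuousOn y D)
    (K : EuclideanSpace ℝ (Fin d) → EuclideanSpace ℝ (Fin d) → ℝ)
    (hK : ∀ s x, K s x = ⟪y s, y x⟫_ℝ)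
    (hKpos : ∀ x ∈ D, 0 < K x x)
    (c : ℝ → ℝ)
    (hc : ∀ δ, c δ =
      sInf {r : ℝ | ∃ x₁ ∈ D, ∃ x₂ ∈ D, dist x₁ x₂ ≤ δ ∧ r = (K x₁ x₂ / K x₂ x₂) ^ 2})
    (Ω : Set (EuclideanSpace ℝ (Fin d))) (hΩD : Ω ⊆ D) (hΩ : MeasurableSet Ω)
    (s₀ : EuclideanSpace ℝ (Fin d)) (hs₀ : s₀ ∈ Ω)
    (W : Submodule ℝ H) (hWclosed : IsClosed (W : Set H)) [W.HasOrthogonalProjection] :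
    (1 / 2) * (∫ s in Ω, ‖y s - (Submodule.orthogonalProjectionOnto W (y s) : H)‖ ^ 2) -
        (1 - c (Metric.diam Ω)) * (∫ s in Ω, K s s) ≤
      c (Metric.diam Ω) * (volume Ω).toReal *
        ‖y s₀ - (Submodule.orthogonalProjectionOnto W (y s₀) : H)‖ ^ 2 :=
  lemma1_lower_general D hD y hy K hK c hc Ω hΩD hΩ s₀ hs₀ W
end

section
/- Let D ⊂ ℝ^d be compact, H a real Hilbert space, y : D → H continuous, K(s,x) = ⟨y(s),y(x)⟩ with K(x,x) > 0 on D. Let s₁,…,sₙ be distinct points of D with Voronoi cells Dᵢ (which cover D) and δᵢ = Δ(Dᵢ), and let y*(s) denote the orthogonal projection of y(s) onto span{y(s₁),…,y(sₙ)} (the predictive process). Then ∫_D ‖y(s) − y*(s)‖² ds ≤ |D|·(1 − minᵢ c(δᵢ))·max_{s∈D} K(s,s). -/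
open scoped InnerProductSpace
open MeasureTheory

/-!
Near each point `x` of `D` lies a centre `sᵢ` in the same Voronoi cell, so `‖x - sᵢ‖ ≤ δᵢ`.
Projecting `y(x)` onto the single vector `y(sᵢ)` leaves the squared residual
`K(x,x) - K(x,sᵢ)² / K(sᵢ,sᵢ)`, and `c(δᵢ)` is below both squared ratios `K(x,sᵢ)/K(x,x)` and
`K(x,sᵢ)/K(sᵢ,sᵢ)`, hence below `K(x,sᵢ)² / (K(x,x) K(sᵢ,sᵢ))`. This bounds the residual by
`(1 - c(δᵢ)) K(x,x)`; the projection onto the full span does at least as well, and integrating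
the uniform bound `(1 - minᵢ c(δᵢ)) max K` over `D` gives the claim.
-/

section Voronoi

variable {ι E : Type*} [PseudoMetricSpace E]

def voronoiCell (D : Set E) (s : ι → E) (i : ι) : Set E :=
  {x ∈ D | ∀ j, dist x (s i) ≤ dist x (s j)}

variable {D : Set E} {s : ι → E} {i : ι} {x : E}

theorem voronoiCell_subset : voronoiCell D s i ⊆ D := fun _ hx => hx.1

theorem mem_voronoiCell_self (hs : s i ∈ D) : s i ∈ voronoiCell D s i :=
  ⟨hs, fun j => by simp [dist_nonneg]⟩

theorem exists_mem_voronoiCell [Finite ι] [Nonempty ι] (hx : x ∈ D) :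
    ∃ i, x ∈ voronoiCell D s i := by
  obtain ⟨i, hi⟩ := Finite.exists_min fun j => dist x (s j)
  exact ⟨i, hx, hi⟩

theorem dist_le_diam_voronoiCell (hD : Bornology.IsBounded D) (hs : s i ∈ D)
    (hx : x ∈ voronoiCell D s i) : dist x (s i) ≤ Metric.diam (voronoiCell D s i) :=
  Metric.dist_le_diam_of_mem (hD.subset voronoiCell_subset) hx (mem_voronoiCell_self hs)

end Voronoi

section Correlation

variable {E : Type*} [PseudoMetricSpace E]

/-- The paper's `c(δ)`. -/
noncomputable def sqCorrelationInf (D : Set E) (K : E → E → ℝ) (δ : ℝ) : ℝ :=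
  sInf {r : ℝ | ∃ x₁ ∈ D, ∃ x₂ ∈ D, dist x₁ x₂ ≤ δ ∧ r = (K x₁ x₂ / K x₂ x₂) ^ 2}

variable {D : Set E} {K : E → E → ℝ} {δ : ℝ} {x₁ x₂ : E}

theorem sqCorrelationInf_le (hx₁ : x₁ ∈ D) (hx₂ : x₂ ∈ D) (hδ : dist x₁ x₂ ≤ δ) :
    sqCorrelationInf D K δ ≤ (K x₁ x₂ / K x₂ x₂) ^ 2 :=
  csInf_le ⟨0, by rintro r ⟨_, _, _, _, _, rfl⟩; positivity⟩ ⟨x₁, hx₁, x₂, hx₂, hδ, rfl⟩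

theorem sqCorrelationInf_le_one (hx : x₁ ∈ D) (hK : K x₁ x₁ ≠ 0) (hδ : 0 ≤ δ) :
    sqCorrelationInf D K δ ≤ 1 := by
  simpa [hK] using sqCorrelationInf_le (K := K) hx hx (by simpa using hδ)

end Correlation

theorem mul_le_sq_div_of_le_sq_div {a c p q : ℝ} (hp : 0 < p) (hq : 0 < q)
    (hcp : c ≤ (a / p) ^ 2) (hcq : c ≤ (a / q) ^ 2) : c * p ≤ a ^ 2 / q := by
  rw [div_pow] at hcp hcq
  rw [le_div_iff₀ hq]
  rw [le_div_iff₀ (by positivity)] at hcp hcq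
  rcases le_total 0 c with hc | hc
  · rcases le_total p q with hpq | hpq
    · nlinarith [mul_le_mul_of_nonneg_left hpq (mul_nonneg hc hq.le)]
    · nlinarith [mul_le_mul_of_nonneg_left hpq (mul_nonneg hc hp.le)]
  · nlinarith [mul_nonpos_of_nonpos_of_nonneg hc (mul_pos hp hq).le, sq_nonneg a]

section Projection

variable {H : Type*} [NormedAddCommGroup H] [InnerProductSpace ℝ H]
  (U : Submodule ℝ H) [U.HasOrthogonalProjection]

theorem Submodule.norm_sub_starProjection_le_of_mem (u : H) {v : H} (hv : v ∈ U) :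
    ‖u - U.starProjection u‖ ≤ ‖u - v‖ := by
  rw [Submodule.starProjection_minimal]
  exact ciInf_le ⟨0, by rintro r ⟨w, rfl⟩; positivity⟩ (⟨v, hv⟩ : U)

theorem Submodule.norm_sub_starProjection_sq_le_of_mem (u : H) {w : H} (hw : w ∈ U) :
    ‖u - U.starProjection u‖ ^ 2 ≤ ⟪u, u⟫_ℝ - ⟪u, w⟫_ℝ ^ 2 / ⟪w, w⟫_ℝ := by
  by_cases hw0 : w = 0
  · simpa [hw0, real_inner_self_eq_norm_sq] using
      pow_le_pow_left₀ (norm_nonneg _) (U.norm_sub_starProjection_le_of_mem u U.zero_mem) 2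
  have hww : ⟪w, w⟫_ℝ ≠ 0 := inner_self_ne_zero.mpr hw0
  calc ‖u - U.starProjection u‖ ^ 2
      ≤ ‖u - (⟪u, w⟫_ℝ / ⟪w, w⟫_ℝ) • w‖ ^ 2 :=
        pow_le_pow_left₀ (norm_nonneg _)
          (U.norm_sub_starProjection_le_of_mem u (U.smul_mem _ hw)) 2
    _ = ⟪u, u⟫_ℝ - ⟪u, w⟫_ℝ ^ 2 / ⟪w, w⟫_ℝ := by
        rw [← real_inner_self_eq_norm_sq, inner_sub_sub_self, real_inner_smul_left,
          real_inner_smul_right, real_inner_smul_left, real_inner_smul_right, real_inner_comm w u]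
        field_simp
        ring

theorem Submodule.norm_sub_starProjection_sq_le_of_le_sq_div (u : H) {w : H} (hw : w ∈ U)
    (hu : 0 < ⟪u, u⟫_ℝ) (hw₀ : 0 < ⟪w, w⟫_ℝ) {c : ℝ}
    (hcu : c ≤ (⟪w, u⟫_ℝ / ⟪u, u⟫_ℝ) ^ 2) (hcw : c ≤ (⟪u, w⟫_ℝ / ⟪w, w⟫_ℝ) ^ 2) :
    ‖u - U.starProjection u‖ ^ 2 ≤ (1 - c) * ⟪u, u⟫_ℝ := by
  rw [real_inner_comm] at hcu
  have := mul_le_sq_div_of_le_sq_div hu hw₀ hcu hcw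
  linarith [U.norm_sub_starProjection_sq_le_of_mem u hw]

end Projection

theorem setIntegral_le_mul_measureReal {X : Type*} [MeasurableSpace X] {μ : Measure X}
    {s : Set X} {f : X → ℝ} {C : ℝ} (hs : μ s < ⊤) (hf₀ : ∀ x ∈ s, 0 ≤ f x)
    (hfC : ∀ x ∈ s, f x ≤ C) : ∫ x in s, f x ∂μ ≤ C * μ.real s :=
  (Real.le_norm_self _).trans <| norm_setIntegral_le_of_norm_le_const hs fun x hx => by
    rw [Real.norm_of_nonneg (hf₀ x hx)]
    exact hfC x hx

theorem predictive_process_error_bound_general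
    {d : ℕ} {H : Type*} [NormedAddCommGroup H] [InnerProductSpace ℝ H]
    (D : Set (EuclideanSpace ℝ (Fin d))) (hD : IsCompact D)
    (y : EuclideanSpace ℝ (Fin d) → H) (hy : ContinuousOn y D)
    (K : EuclideanSpace ℝ (Fin d) → EuclideanSpace ℝ (Fin d) → ℝ)
    (hK : ∀ s x, K s x = ⟪y s, y x⟫_ℝ)
    (hKpos : ∀ x ∈ D, 0 < K x x)
    (c : ℝ → ℝ)
    (hc : ∀ δ, c δ =
      sInf {r : ℝ | ∃ x₁ ∈ D, ∃ x₂ ∈ D, dist x₁ x₂ ≤ δ ∧ r = (K x₁ x₂ / K x₂ x₂) ^ 2})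
    {n : ℕ} (hn : 0 < n)
    (s : Fin n → EuclideanSpace ℝ (Fin d)) (hs_mem : ∀ i, s i ∈ D)
    (Di : Fin n → Set (EuclideanSpace ℝ (Fin d)))
    (hDi : ∀ i, Di i = {x ∈ D | ∀ j, dist x (s i) ≤ dist x (s j)})
    (Hn : Submodule ℝ H)
    (hHn : Hn = Submodule.span ℝ (Set.range fun i => y (s i)))
    [FiniteDimensional ℝ Hn] :
    (∫ x in D, ‖y x - (Submodule.orthogonalProjectionOnto Hn (y x) : H)‖ ^ 2) ≤
      (volume D).toReal * (1 - ⨅ i : Fin n, c (Metric.diam (Di i))) *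
        sSup ((fun x => K x x) '' D) := by
  obtain rfl : c = sqCorrelationInf D K := funext hc
  obtain rfl : Di = voronoiCell D s := funext hDi
  obtain rfl : K = fun s x => ⟪y s, y x⟫_ℝ := funext₂ hK
  have : Nonempty (Fin n) := Fin.pos_iff_nonempty.mp hn
  set M := sSup ((fun x => ⟪y x, y x⟫_ℝ) '' D)
  set cmin := ⨅ i, sqCorrelationInf D _ (Metric.diam (voronoiCell D s i))
  have hKM : ∀ x ∈ D, ⟪y x, y x⟫_ℝ ≤ M := fun x hx =>
    le_csSup (hD.image_of_continuousOn (hy.inner hy)).bddAbove ⟨x, hx, rfl⟩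
  have hcmin : ∀ i, cmin ≤ sqCorrelationInf D _ (Metric.diam (voronoiCell D s i)) :=
    ciInf_le (Set.finite_range _).bddBelow
  have hcmin_le_one : cmin ≤ 1 :=
    (hcmin ⟨0, hn⟩).trans (sqCorrelationInf_le_one (hs_mem ⟨0, hn⟩)
      (hKpos _ (hs_mem ⟨0, hn⟩)).ne' Metric.diam_nonneg)
  have hpointwise : ∀ x ∈ D, ‖y x - Hn.starProjection (y x)‖ ^ 2 ≤ (1 - cmin) * M := by
    intro x hx
    obtain ⟨i, hxi⟩ := exists_mem_voronoiCell (s := s) hx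
    have hdist := dist_le_diam_voronoiCell hD.isBounded (hs_mem i) hxi
    have hc₁ : cmin ≤ (⟪y (s i), y x⟫_ℝ / ⟪y x, y x⟫_ℝ) ^ 2 :=
      (hcmin i).trans (sqCorrelationInf_le (hs_mem i) hx (by rwa [dist_comm]))
    have hc₂ : cmin ≤ (⟪y x, y (s i)⟫_ℝ / ⟪y (s i), y (s i)⟫_ℝ) ^ 2 :=
      (hcmin i).trans (sqCorrelationInf_le hx (hs_mem i) hdist)
    calc _ ≤ (1 - cmin) * ⟪y x, y x⟫_ℝ :=
          Hn.norm_sub_starProjection_sq_le_of_le_sq_div (y x)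
            (hHn ▸ Submodule.subset_span ⟨i, rfl⟩) (hKpos x hx) (hKpos _ (hs_mem i)) hc₁ hc₂
      _ ≤ (1 - cmin) * M := mul_le_mul_of_nonneg_left (hKM x hx) (sub_nonneg.mpr hcmin_le_one)
  calc (∫ x in D, ‖y x - (Hn.orthogonalProjectionOnto (y x) : H)‖ ^ 2)
      ≤ (1 - cmin) * M * volume.real D :=
        setIntegral_le_mul_measureReal hD.measure_lt_top (fun _ _ => by positivity) hpointwise
    _ = (volume D).toReal * (1 - cmin) * M := by rw [Measure.real]; ring

/-- Bound on the integrated squared error of the predictive process (from the proof of the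
paper's Theorem 1): with Voronoi cells `Dᵢ` of the distinct points `s₁,…,sₙ ∈ D` and
`y*(s)` the orthogonal projection of `y(s)` onto `span{y(s₁),…,y(sₙ)}`,
`∫_D ‖y(s) − y*(s)‖² ds ≤ |D|·(1 − minᵢ c(δᵢ))·max_{s∈D} K(s,s)`. -/
theorem predictive_process_error_bound
    {d : ℕ} {H : Type*} [NormedAddCommGroup H] [InnerProductSpace ℝ H]
    (D : Set (EuclideanSpace ℝ (Fin d))) (hD : IsCompact D)
    (y : EuclideanSpace ℝ (Fin d) → H) (hy : ContinuousOn y D)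
    (K : EuclideanSpace ℝ (Fin d) → EuclideanSpace ℝ (Fin d) → ℝ)
    (hK : ∀ s x, K s x = ⟪y s, y x⟫_ℝ)
    (hKpos : ∀ x ∈ D, 0 < K x x)
    (c : ℝ → ℝ)
    (hc : ∀ δ, c δ =
      sInf {r : ℝ | ∃ x₁ ∈ D, ∃ x₂ ∈ D, dist x₁ x₂ ≤ δ ∧ r = (K x₁ x₂ / K x₂ x₂) ^ 2})
    {n : ℕ} (hn : 0 < n)
    (s : Fin n → EuclideanSpace ℝ (Fin d)) (hs_mem : ∀ i, s i ∈ D)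
    (hs_inj : Function.Injective s)
    (Di : Fin n → Set (EuclideanSpace ℝ (Fin d)))
    (hDi : ∀ i, Di i = {x ∈ D | ∀ j, dist x (s i) ≤ dist x (s j)})
    (Hn : Submodule ℝ H)
    (hHn : Hn = Submodule.span ℝ (Set.range fun i => y (s i)))
    [FiniteDimensional ℝ Hn] :
    (∫ x in D, ‖y x - (Submodule.orthogonalProjectionOnto Hn (y x) : H)‖ ^ 2) ≤
      (volume D).toReal * (1 - ⨅ i : Fin n, c (Metric.diam (Di i))) *
        sSup ((fun x => K x x) '' D) :=
  predictive_process_error_bound_general D hD y hy K hK hKpos c hc hn s hs_mem Di hDi Hn hHn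
end

section
/- Let V ∈ ℝ^{n×n} be symmetric positive semidefinite with eigenvalues λ₁ ≥ … ≥ λₙ ≥ 0 and orthonormal eigenvectors u₁,…,uₙ. For 1 ≤ k < n set V_k = Σ_{i=1}^k λᵢ uᵢuᵢᵀ, let τ > 0, and M = V(V_k + τI)⁻¹. Then trace((I − M)V(I − M)ᵀ) = Σ_{i=1}^k λᵢ/(1 + λᵢ/τ)² + Σ_{i=k+1}^n λᵢ(1 − λᵢ/τ)². -/
/-!
In the orthonormal eigenbasis `P` (rows `uᵢ`) both `V` and `V_k + τI` are diagonal,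
`V = Pᵀ diag(λ) P` and `V_k + τI = Pᵀ diag(dᵢ + τ) P` with `dᵢ = λᵢ` for `i < k` and
`dᵢ = 0` otherwise. Hence `I − M = Pᵀ diag(1 − λᵢ/(dᵢ + τ)) P` and the trace is
`∑ᵢ λᵢ (1 − λᵢ/(dᵢ + τ))²`; the two cases `i < k` and `i ≥ k` give the two sums.
-/

open Matrix

section OrthogonalConj

variable {m : Type*} [Fintype m] [DecidableEq m] {P : Matrix m m ℝ}

theorem conj_diagonal_mul_conj_diagonal (hP : P * Pᵀ = 1) (a b : m → ℝ) :
    Pᵀ * diagonal a * P * (Pᵀ * diagonal b * P) = Pᵀ * diagonal (a * b) * P := by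
  calc Pᵀ * diagonal a * P * (Pᵀ * diagonal b * P)
      = Pᵀ * (diagonal a * (P * Pᵀ) * diagonal b) * P := by simp only [Matrix.mul_assoc]
    _ = Pᵀ * diagonal (a * b) * P := by rw [hP, Matrix.mul_one, diagonal_mul_diagonal]; rfl

theorem conj_diagonal_const (hP : P * Pᵀ = 1) (c : ℝ) :
    Pᵀ * diagonal (fun _ => c) * P = c • 1 := by
  rw [← smul_one_eq_diagonal, Matrix.mul_smul, Matrix.mul_one, Matrix.smul_mul,
    mul_eq_one_comm.mp hP]

theorem conj_diagonal_sub_conj_diagonal (a b : m → ℝ) :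
    Pᵀ * diagonal a * P - Pᵀ * diagonal b * P = Pᵀ * diagonal (a - b) * P := by
  rw [← Matrix.sub_mul, ← Matrix.mul_sub, diagonal_sub]; rfl

theorem conj_diagonal_add_conj_diagonal (a b : m → ℝ) :
    Pᵀ * diagonal a * P + Pᵀ * diagonal b * P = Pᵀ * diagonal (a + b) * P := by
  rw [← Matrix.add_mul, ← Matrix.mul_add, diagonal_add]; rfl

theorem inv_conj_diagonal (hP : P * Pᵀ = 1) {a : m → ℝ} (ha : ∀ i, a i ≠ 0) :
    (Pᵀ * diagonal a * P)⁻¹ = Pᵀ * diagonal a⁻¹ * P := by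
  refine inv_eq_right_inv ?_
  have hone : a * a⁻¹ = fun _ => 1 := funext fun i => mul_inv_cancel₀ (ha i)
  rw [conj_diagonal_mul_conj_diagonal hP, hone, conj_diagonal_const hP, one_smul]

theorem transpose_conj_diagonal (a : m → ℝ) :
    (Pᵀ * diagonal a * P)ᵀ = Pᵀ * diagonal a * P := by
  rw [transpose_mul, transpose_mul, transpose_transpose, diagonal_transpose, Matrix.mul_assoc]

theorem trace_conj_diagonal (hP : P * Pᵀ = 1) (a : m → ℝ) :
    (Pᵀ * diagonal a * P).trace = ∑ i, a i := by
  rw [trace_mul_cycle, hP, Matrix.one_mul, trace_diagonal]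

theorem trace_residual_conj_diagonal (hP : P * Pᵀ = 1) (lam : m → ℝ) {a : m → ℝ}
    (ha : ∀ i, a i ≠ 0) :
    ((1 - Pᵀ * diagonal lam * P * (Pᵀ * diagonal a * P)⁻¹) * (Pᵀ * diagonal lam * P) *
        (1 - Pᵀ * diagonal lam * P * (Pᵀ * diagonal a * P)⁻¹)ᵀ).trace =
      ∑ i, lam i * (1 - lam i / a i) ^ 2 := by
  set c : m → ℝ := fun i => 1 - lam i / a i
  have hresidual :
      1 - Pᵀ * diagonal lam * P * (Pᵀ * diagonal a * P)⁻¹ = Pᵀ * diagonal c * P := by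
    rw [inv_conj_diagonal hP ha, conj_diagonal_mul_conj_diagonal hP, ← one_smul ℝ 1,
      ← conj_diagonal_const hP, conj_diagonal_sub_conj_diagonal]
    simp only [c, div_eq_mul_inv]; rfl
  rw [hresidual, transpose_conj_diagonal, conj_diagonal_mul_conj_diagonal hP,
    conj_diagonal_mul_conj_diagonal hP, trace_conj_diagonal hP]
  exact Finset.sum_congr rfl fun i _ => by simp only [Pi.mul_apply, c]; ring

end OrthogonalConj

section Orthonormal

variable {m : Type*} [Fintype m] [DecidableEq m] {u : m → m → ℝ}

theorem of_mul_transpose_of_orthonormal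
    (hu : ∀ i j, (∑ a, u i a * u j a) = if i = j then 1 else 0) : of u * (of u)ᵀ = 1 := by
  ext i j
  simpa only [mul_apply, transpose_apply, of_apply, one_apply] using hu i j

theorem sum_smul_vecMulVec_eq_conj_diagonal (d : m → ℝ) :
    ∑ i, d i • vecMulVec (u i) (u i) = (of u)ᵀ * diagonal d * of u := by
  ext a b
  rw [Matrix.sum_apply, mul_apply]
  simp only [mul_diagonal, transpose_apply, of_apply, Matrix.smul_apply, vecMulVec_apply,
    smul_eq_mul]
  exact Finset.sum_congr rfl fun i _ => by ring

theorem eq_conj_diagonal_of_mulVec_eq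
    (hu : ∀ i j, (∑ a, u i a * u j a) = if i = j then 1 else 0)
    {V : Matrix m m ℝ} {lam : m → ℝ} (hV : ∀ i, V *ᵥ u i = lam i • u i) :
    V = (of u)ᵀ * diagonal lam * of u := by
  have hVPt : V * (of u)ᵀ = (of u)ᵀ * diagonal lam := by
    ext a i
    rw [mul_diagonal, mul_apply]
    simpa only [transpose_apply, of_apply, mulVec, dotProduct,
      Pi.smul_apply, smul_eq_mul, mul_comm (lam i)] using congrFun (hV i) a
  calc V = V * ((of u)ᵀ * of u) := by
        rw [mul_eq_one_comm.mp (of_mul_transpose_of_orthonormal hu), Matrix.mul_one]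
    _ = (of u)ᵀ * diagonal lam * of u := by rw [← Matrix.mul_assoc, hVPt]

end Orthonormal

theorem one_sub_div_add_sq_mul {l τ : ℝ} (hl : 0 ≤ l) (hτ : 0 < τ) :
    l * (1 - l / (l + τ)) ^ 2 = l / (1 + l / τ) ^ 2 := by
  have : l + τ ≠ 0 := by positivity
  field_simp
  ring

theorem perturbation_mse_trace_general
    {n : ℕ} (V : Matrix (Fin n) (Fin n) ℝ)
    (lam : Fin n → ℝ)
    (hlam_nonneg : ∀ i, 0 ≤ lam i)
    (u : Fin n → Fin n → ℝ)
    (hu_orth : ∀ i j, (∑ a, u i a * u j a) = if i = j then 1 else 0)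
    (hu_eig : ∀ i, V.mulVec (u i) = lam i • u i)
    {k : ℕ}
    (Vk : Matrix (Fin n) (Fin n) ℝ)
    (hVk : Vk = ∑ i ∈ Finset.univ.filter (fun i : Fin n => (i : ℕ) < k),
      lam i • Matrix.vecMulVec (u i) (u i))
    (τ : ℝ) (hτ : 0 < τ) :
    ((1 - V * (Vk + τ • 1)⁻¹) * V * (1 - V * (Vk + τ • 1)⁻¹)ᵀ).trace =
      (∑ i ∈ Finset.univ.filter (fun i : Fin n => (i : ℕ) < k),
        lam i / (1 + lam i / τ) ^ 2) +
      ∑ i ∈ Finset.univ.filter (fun i : Fin n => k ≤ (i : ℕ)),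
        lam i * (1 - lam i / τ) ^ 2 := by
  have hP := of_mul_transpose_of_orthonormal hu_orth
  set d : Fin n → ℝ := fun i => if (i : ℕ) < k then lam i else 0
  have hd_nonneg : ∀ i, 0 ≤ d i := fun i => by
    by_cases hik : (i : ℕ) < k <;> simp [d, hik, hlam_nonneg i]
  have hreg : Vk + τ • 1 = (of u)ᵀ * diagonal (fun i => d i + τ) * of u := by
    calc Vk + τ • 1
        = (of u)ᵀ * diagonal d * of u + (of u)ᵀ * diagonal (fun _ => τ) * of u := by
          rw [hVk, Finset.sum_filter, conj_diagonal_const hP,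
            ← sum_smul_vecMulVec_eq_conj_diagonal]
          simp only [d, ite_smul, zero_smul]
      _ = (of u)ᵀ * diagonal (fun i => d i + τ) * of u := conj_diagonal_add_conj_diagonal _ _
  rw [hreg, eq_conj_diagonal_of_mulVec_eq hu_orth hu_eig,
    trace_residual_conj_diagonal hP _
      fun i => (add_pos_of_nonneg_of_pos (hd_nonneg i) hτ).ne',
    ← Finset.sum_filter_add_sum_filter_not Finset.univ (fun i : Fin n => (i : ℕ) < k)]
  congr 1
  · refine Finset.sum_congr rfl fun i hi => ?_
    rw [Finset.mem_filter] at hi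
    simp only [d, if_pos hi.2]
    exact one_sub_div_add_sq_mul (hlam_nonneg i) hτ
  · refine Finset.sum_congr (by simp only [not_lt]) fun i hi => ?_
    rw [Finset.mem_filter] at hi
    simp only [d, if_neg (not_lt.mpr hi.2), zero_add]

/-- Trace form of the paper's equation (17): for symmetric PSD `V` with eigenvalues
`λ₁ ≥ … ≥ λₙ ≥ 0` and orthonormal eigenvectors `u₁,…,uₙ`, `V_k = ∑_{i≤k} λᵢuᵢuᵢᵀ`, `τ > 0`,
and `M = V(V_k + τI)⁻¹`:
`trace((I − M)V(I − M)ᵀ) = ∑_{i≤k} λᵢ/(1+λᵢ/τ)² + ∑_{i>k} λᵢ(1−λᵢ/τ)²`. -/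
theorem perturbation_mse_trace
    {n : ℕ} (V : Matrix (Fin n) (Fin n) ℝ)
    (hVsym : V.IsSymm)
    (lam : Fin n → ℝ)
    (hlam_anti : Antitone lam)
    (hlam_nonneg : ∀ i, 0 ≤ lam i)
    (u : Fin n → Fin n → ℝ)
    (hu_orth : ∀ i j, (∑ a, u i a * u j a) = if i = j then 1 else 0)
    (hu_eig : ∀ i, V.mulVec (u i) = lam i • u i)
    {k : ℕ} (hk : 1 ≤ k) (hkn : k < n)
    (Vk : Matrix (Fin n) (Fin n) ℝ)
    (hVk : Vk = ∑ i ∈ Finset.univ.filter (fun i : Fin n => (i : ℕ) < k),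
      lam i • Matrix.vecMulVec (u i) (u i))
    (τ : ℝ) (hτ : 0 < τ) :
    ((1 - V * (Vk + τ • 1)⁻¹) * V * (1 - V * (Vk + τ • 1)⁻¹)ᵀ).trace =
      (∑ i ∈ Finset.univ.filter (fun i : Fin n => (i : ℕ) < k),
        lam i / (1 + lam i / τ) ^ 2) +
      ∑ i ∈ Finset.univ.filter (fun i : Fin n => k ≤ (i : ℕ)),
        lam i * (1 - lam i / τ) ^ 2 :=
  perturbation_mse_trace_general V lam hlam_nonneg u hu_orth hu_eig Vk hVk τ hτ
end
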